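/- arXiv:math/9805070 — 3 statements merged into one kernel-verified Lean document; each statement's English description precedes it below -/
import Mathlib

section
/- For all integers n ≥ 1 and 1 ≤ a ≤ n, one has |I(n,a)| ≥ (1/2) · ∫_{a−1}^{a} |∏_{k ∈ {0,…,n}, k ≠ a} (k² − x²)| dx. -/
open Real

/-- `I n a = ∫₀^a ∏_{k ∈ {0,…,n}, k ≠ a} (k² − x²) dx`. -/
noncomputable def I (n a : ℕ) : ℝ :=
  ∫ x in (0:ℝ)..(a:ℝ), ∏ k ∈ (Finset.range (n+1)).erase a, ((k:ℝ)^2 - x^2)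

/-- `C n = (4π)^{-(n+1/2)} / Γ(n+1/2)`. -/
noncomputable def C (n : ℕ) : ℝ :=
  (4*π) ^ (-((n:ℝ) + 1/2)) / Real.Gamma ((n:ℝ) + 1/2)

/-- `α n = 4π C n Σ_{j=0}^{n-1} (2n choose j) |I(n, n-j)|`. -/
noncomputable def α (n : ℕ) : ℝ :=
  4*π * C n * ∑ j ∈ Finset.range n, ((2*n).choose j : ℝ) * |I n (n - j)|

/-- `f n a r t = (t+r)/((a+t+r)(a−t−r)) · ∏_{k=−n+r}^{n+r} (t+k)`. -/
noncomputable def f (n a r : ℕ) (t : ℝ) : ℝ :=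
  ((t + r) / (((a:ℝ) + t + r) * ((a:ℝ) - t - r))) *
    ∏ k ∈ Finset.range (2*n+1), (t + ((k:ℝ) - n + r))

noncomputable def PP (n a : ℕ) (x : ℝ) : ℝ :=
  ∏ k ∈ (Finset.range (n+1)).erase a, ((k:ℝ)^2 - x^2)

lemma contPP (n a : ℕ) : Continuous (PP n a) := by
  unfold PP
  exact continuous_finset_prod _ fun k _ => by fun_prop

lemma tel_plus (n : ℕ) (y : ℝ) :
    (∏ k ∈ Finset.range (n+1), ((k:ℝ) + (y+1))) * y =
    (∏ k ∈ Finset.range (n+1), ((k:ℝ) + y)) * ((n:ℝ) + 1 + y) := by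
  have h2 := Finset.prod_range_succ' (fun k : ℕ => ((k:ℝ) + y)) (n+1)
  rw [Finset.prod_range_succ (fun k : ℕ => ((k:ℝ) + y)) (n+1)] at h2
  push_cast at h2
  have : ∏ k ∈ Finset.range (n+1), ((k:ℝ) + (y+1)) =
      ∏ k ∈ Finset.range (n+1), ((k:ℝ) + 1 + y) :=
    Finset.prod_congr rfl fun k _ => by ring
  rw [this]
  linear_combination -h2

lemma tel_minus (n : ℕ) (y : ℝ) (hy0 : 0 < y) (hyn : y < n) :
    (∏ k ∈ Finset.range (n+1), |(k:ℝ) - (y+1)|) * ((n:ℝ) - y) =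
    (∏ k ∈ Finset.range (n+1), |(k:ℝ) - y|) * (1 + y) := by
  have h2 := Finset.prod_range_succ' (fun k : ℕ => |(k:ℝ) - (y+1)|) (n+1)
  rw [Finset.prod_range_succ (fun k : ℕ => |(k:ℝ) - (y+1)|) (n+1)] at h2
  have e1 : ∀ k : ℕ, |((k+1:ℕ):ℝ) - (y+1)| = |(k:ℝ) - y| := by
    intro k; push_cast; ring_nf
  rw [Finset.prod_congr rfl (fun k _ => e1 k)] at h2
  have e2 : |((0:ℕ):ℝ) - (y+1)| = 1 + y := by
    rw [abs_sub_comm]; simp; rw [abs_of_nonneg (by linarith)]; ring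
  have e3 : |(((n+1):ℕ):ℝ) - (y+1)| = (n:ℝ) - y := by
    push_cast; rw [show (n:ℝ)+1-(y+1) = (n:ℝ)-y by ring, abs_of_nonneg (by linarith)]
  rw [e2, e3] at h2
  linear_combination h2

lemma absPP (n a : ℕ) (x : ℝ) (hx : 0 ≤ x) :
    |PP n a x| = (∏ k ∈ (Finset.range (n+1)).erase a, |(k:ℝ) - x|) *
      (∏ k ∈ (Finset.range (n+1)).erase a, ((k:ℝ) + x)) := by
  unfold PP
  rw [Finset.abs_prod, ← Finset.prod_mul_distrib]
  refine Finset.prod_congr rfl fun k _ => ?_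
  rw [show (k:ℝ)^2 - x^2 = ((k:ℝ) - x) * ((k:ℝ) + x) by ring, abs_mul,
    abs_of_nonneg (by positivity : (0:ℝ) ≤ (k:ℝ) + x)]

lemma keyid (n a : ℕ) (han : a ≤ n) (y : ℝ) (hy0 : 0 < y) (hya : y < (a:ℝ) - 1) :
    (y * ((n:ℝ)-y) * ((a:ℝ)-1-y) * ((a:ℝ)+1+y)) * |PP n a (y+1)| =
    ((1+y) * ((n:ℝ)+1+y) * ((a:ℝ)-y) * ((a:ℝ)+y)) * |PP n a y| := by
  have hyn : y < (n:ℝ) := by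
    have : (a:ℝ) ≤ n := by exact_mod_cast han
    linarith
  have ha' : a ∈ Finset.range (n+1) := by simp; omega
  set U := ∏ k ∈ (Finset.range (n+1)).erase a, |(k:ℝ) - (y+1)| with hU
  set V := ∏ k ∈ (Finset.range (n+1)).erase a, ((k:ℝ) + (y+1)) with hV
  set u := ∏ k ∈ (Finset.range (n+1)).erase a, |(k:ℝ) - y| with hu
  set v := ∏ k ∈ (Finset.range (n+1)).erase a, ((k:ℝ) + y) with hv
  have hplus := tel_plus n y
  have hminus := tel_minus n y hy0 hyn
  rw [← Finset.mul_prod_erase _ (fun k : ℕ => ((k:ℝ) + (y+1))) ha',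
      ← Finset.mul_prod_erase _ (fun k : ℕ => ((k:ℝ) + y)) ha'] at hplus
  rw [← Finset.mul_prod_erase _ (fun k : ℕ => |(k:ℝ) - (y+1)|) ha',
      ← Finset.mul_prod_erase _ (fun k : ℕ => |(k:ℝ) - y|) ha'] at hminus
  rw [show |(a:ℝ) - (y+1)| = (a:ℝ)-1-y by
        rw [show (a:ℝ)-(y+1) = (a:ℝ)-1-y by ring, abs_of_nonneg (by linarith)],
      show |(a:ℝ) - y| = (a:ℝ)-y from abs_of_nonneg (by linarith)] at hminus
  rw [absPP n a (y+1) (by linarith), absPP n a y (by linarith), ← hU, ← hV, ← hu, ← hv]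
  linear_combination ((((a:ℝ)-1-y) * U) * (((n:ℝ))-y)) * hplus
    + ((((a:ℝ)+y) * v) * (((n:ℝ))+1+y)) * hminus

lemma AB_le (n a : ℕ) (c : ℝ) (y : ℝ) (hy0 : 0 < y) (hya : y < (a:ℝ)-1)
    (hyn : y < (n:ℝ)) (hc : c * ((a:ℝ)-1-y) ≤ (a:ℝ)-y) (hc0 : 0 ≤ c) :
    c * (y * ((n:ℝ)-y) * ((a:ℝ)-1-y) * ((a:ℝ)+1+y)) ≤
      (1+y) * ((n:ℝ)+1+y) * ((a:ℝ)-y) * ((a:ℝ)+y) := by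
  have ha1 : (1:ℝ) < (a:ℝ) := by linarith
  have e1 : y*((a:ℝ)+1+y) ≤ (1+y)*((a:ℝ)+y) := by nlinarith
  have e2 : ((n:ℝ)-y)*(c*((a:ℝ)-1-y)) ≤ ((n:ℝ)+1+y)*((a:ℝ)-y) := by
    apply mul_le_mul (by linarith) hc (mul_nonneg hc0 (by linarith)) (by linarith)
  have e3 : (y*((a:ℝ)+1+y)) * (((n:ℝ)-y)*(c*((a:ℝ)-1-y))) ≤
      ((1+y)*((a:ℝ)+y)) * (((n:ℝ)+1+y)*((a:ℝ)-y)) := by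
    apply mul_le_mul e1 e2 (mul_nonneg (by linarith) (mul_nonneg hc0 (by linarith)))
      (mul_nonneg (by linarith) (by linarith))
  nlinarith [e3]

lemma step_le_gen (n a : ℕ) (han : a ≤ n) (c : ℝ) (y : ℝ) (hy0 : 0 < y)
    (hya : y < (a:ℝ)-1) (hc : c * ((a:ℝ)-1-y) ≤ (a:ℝ)-y) (hc0 : 0 ≤ c) :
    c * |PP n a y| ≤ |PP n a (y+1)| := by
  have hyn : y < (n:ℝ) := by
    have : (a:ℝ) ≤ n := by exact_mod_cast han
    linarith
  have h := keyid n a han y hy0 hya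
  have hA : 0 < y * ((n:ℝ)-y) * ((a:ℝ)-1-y) * ((a:ℝ)+1+y) := by
    apply mul_pos (mul_pos (mul_pos hy0 (by linarith)) (by linarith)) (by linarith)
  have hAB := AB_le n a c y hy0 hya hyn hc hc0
  have habs : (0:ℝ) ≤ |PP n a y| := abs_nonneg _
  have h2 := mul_le_mul_of_nonneg_right hAB habs
  rw [← h] at h2
  have h3 : (y * ((n:ℝ)-y) * ((a:ℝ)-1-y) * ((a:ℝ)+1+y)) * (c * |PP n a y|) ≤
      (y * ((n:ℝ)-y) * ((a:ℝ)-1-y) * ((a:ℝ)+1+y)) * |PP n a (y+1)| := by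
    nlinarith [h2]
  exact le_of_mul_le_mul_left h3 hA

lemma step_le (n a : ℕ) (han : a ≤ n) (y : ℝ) (hy0 : 0 < y) (hya : y < (a:ℝ)-1) :
    |PP n a y| ≤ |PP n a (y+1)| := by
  have := step_le_gen n a han 1 y hy0 hya (by linarith) (by norm_num)
  linarith

lemma step_le2 (n a : ℕ) (han : a ≤ n) (y : ℝ) (hy0 : 0 < y) (hya : y < (a:ℝ)-1)
    (hy2 : (a:ℝ) - 2 ≤ y) :
    2 * |PP n a y| ≤ |PP n a (y+1)| :=
  step_le_gen n a han 2 y hy0 hya (by linarith) (by norm_num)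

lemma sign_PP (n a : ℕ) (han : a ≤ n) (m : ℕ) (hma : m < a) (x : ℝ)
    (h1 : (m:ℝ) < x) (h2 : x < (m:ℝ)+1) :
    0 < (-1:ℝ)^(m+1) * PP n a x := by
  have hx0 : (0:ℝ) ≤ x := le_trans (by positivity) h1.le
  unfold PP
  rw [← Finset.prod_filter_mul_prod_filter_not ((Finset.range (n+1)).erase a)
    (fun k => k ≤ m) (fun k => ((k:ℝ)^2 - x^2))]
  have hset : ((Finset.range (n+1)).erase a).filter (fun k => k ≤ m) = Finset.range (m+1) := by
    ext k
    simp only [Finset.mem_filter, Finset.mem_erase, Finset.mem_range]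
    omega
  rw [hset]
  have hneg : ∏ k ∈ Finset.range (m+1), ((k:ℝ)^2 - x^2) =
      (-1:ℝ)^(m+1) * ∏ k ∈ Finset.range (m+1), (x^2 - (k:ℝ)^2) := by
    rw [show (-1:ℝ)^(m+1) = ∏ _k ∈ Finset.range (m+1), (-1:ℝ) by
          rw [Finset.prod_const, Finset.card_range],
        ← Finset.prod_mul_distrib]
    exact Finset.prod_congr rfl fun k _ => by ring
  rw [hneg]
  have hQ : 0 < ∏ k ∈ Finset.range (m+1), (x^2 - (k:ℝ)^2) := by
    apply Finset.prod_pos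
    intro k hk
    have hkm : (k:ℝ) ≤ m := by exact_mod_cast Nat.lt_succ_iff.mp (Finset.mem_range.mp hk)
    nlinarith
  have hR : 0 < ∏ k ∈ ((Finset.range (n+1)).erase a).filter (fun k => ¬ k ≤ m),
      ((k:ℝ)^2 - x^2) := by
    apply Finset.prod_pos
    intro k hk
    simp only [Finset.mem_filter, Finset.mem_erase, Finset.mem_range] at hk
    have : (m:ℝ) + 1 ≤ k := by exact_mod_cast Nat.succ_le_of_lt (by omega)
    nlinarith
  have hsq : ((-1:ℝ)^(m+1)) * ((-1:ℝ)^(m+1)) = 1 := by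
    rw [← mul_pow]; norm_num
  calc (0:ℝ) < (∏ k ∈ Finset.range (m+1), (x^2 - (k:ℝ)^2)) *
      ∏ k ∈ ((Finset.range (n+1)).erase a).filter (fun k => ¬ k ≤ m), ((k:ℝ)^2 - x^2) :=
        mul_pos hQ hR
    _ = (-1:ℝ)^(m+1) * ((-1:ℝ)^(m+1) * (∏ k ∈ Finset.range (m+1), (x^2 - (k:ℝ)^2)) *
      ∏ k ∈ ((Finset.range (n+1)).erase a).filter (fun k => ¬ k ≤ m), ((k:ℝ)^2 - x^2)) := by
        rw [show ∀ z w : ℝ, (-1:ℝ)^(m+1) * ((-1:ℝ)^(m+1) * z * w) =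
          ((-1:ℝ)^(m+1) * (-1:ℝ)^(m+1)) * (z * w) from fun z w => by ring, hsq, one_mul]

lemma alt_bounds : ∀ (m : ℕ) (c : ℕ → ℝ), (∀ i, 0 ≤ c i) → (∀ i, c (i+1) ≤ c i) →
    0 ≤ ∑ i ∈ Finset.range m, (-1:ℝ)^i * c i ∧
      ∑ i ∈ Finset.range m, (-1:ℝ)^i * c i ≤ c 0 := by
  intro m
  induction m with
  | zero => intro c h0 _; simpa using h0 0
  | succ m ih =>
    intro c h0 hd
    have key : ∑ i ∈ Finset.range (m+1), (-1:ℝ)^i * c i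
        = c 0 - ∑ i ∈ Finset.range m, (-1:ℝ)^i * c (i+1) := by
      rw [Finset.sum_range_succ' (fun i => (-1:ℝ)^i * c i) m]
      have h1 : ∑ i ∈ Finset.range m, (-1:ℝ)^(i+1) * c (i+1)
          = ∑ i ∈ Finset.range m, -((-1:ℝ)^i * c (i+1)) :=
        Finset.sum_congr rfl fun i _ => by ring
      rw [h1, Finset.sum_neg_distrib]
      norm_num
      ring
    obtain ⟨ih1, ih2⟩ := ih (fun i => c (i+1)) (fun i => h0 _) (fun i => hd _)
    refine ⟨?_, ?_⟩
    · rw [key]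
      have := hd 0
      linarith
    · rw [key]
      linarith

lemma alt_lower (m : ℕ) (hm : 1 ≤ m) (c : ℕ → ℝ) (h0 : ∀ i, 0 ≤ c i)
    (hd : ∀ i, c (i+1) ≤ c i) :
    c 0 - c 1 ≤ ∑ i ∈ Finset.range m, (-1:ℝ)^i * c i := by
  obtain ⟨m', rfl⟩ : ∃ m', m = m'+1 := ⟨m-1, by omega⟩
  have key : ∑ i ∈ Finset.range (m'+1), (-1:ℝ)^i * c i
      = c 0 - ∑ i ∈ Finset.range m', (-1:ℝ)^i * c (i+1) := by
    rw [Finset.sum_range_succ' (fun i => (-1:ℝ)^i * c i) m']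
    have h1 : ∑ i ∈ Finset.range m', (-1:ℝ)^(i+1) * c (i+1)
        = ∑ i ∈ Finset.range m', -((-1:ℝ)^i * c (i+1)) :=
      Finset.sum_congr rfl fun i _ => by ring
    rw [h1, Finset.sum_neg_distrib]
    norm_num
    ring
  have h2 := (alt_bounds m' (fun i => c (i+1)) (fun i => h0 _) (fun i => hd _)).2
  rw [key]
  linarith

lemma abs_PP_eq (n a : ℕ) (i : ℕ) (hia : i < a) (han : a ≤ n) (x : ℝ)
    (hx1 : (a:ℝ)-1 < x) (hx2 : x < a) :
    |PP n a (x - i)| = (-1:ℝ)^(a - i) * PP n a (x - i) := by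
  have hm1 : ((a - 1 - i : ℕ):ℝ) = (a:ℝ) - 1 - i := by
    push_cast [Nat.cast_sub (by omega : 1 + i ≤ a)]
    have : a - 1 - i = a - (1 + i) := by omega
    rw [this]
    push_cast [Nat.cast_sub (by omega : 1 + i ≤ a)]
    ring
  have hs := sign_PP n a han (a - 1 - i) (by omega) (x - i)
    (by rw [hm1]; linarith) (by rw [hm1]; linarith)
  have hei : a - 1 - i + 1 = a - i := by omega
  rw [hei] at hs
  rw [← abs_of_pos hs, abs_mul, abs_pow, abs_neg, abs_one, one_pow, one_mul]

lemma pointwise (n a : ℕ) (hn : 1 ≤ n) (ha1 : 1 ≤ a) (han : a ≤ n) (x : ℝ)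
    (hx1 : (a:ℝ)-1 < x) (hx2 : x < a) :
    (1/2) * |PP n a x| ≤ (-1:ℝ)^a * ∑ i ∈ Finset.range a, PP n a (x - i) := by
  set c : ℕ → ℝ := fun i => if i < a then |PP n a (x - i)| else 0 with hc
  have hpos : ∀ i, 0 ≤ c i := by
    intro i
    simp only [hc]
    split
    · exact abs_nonneg _
    · exact le_refl 0
  have hdec : ∀ i, c (i+1) ≤ c i := by
    intro i
    simp only [hc]
    by_cases h1 : i + 1 < a
    · rw [if_pos h1, if_pos (by omega)]
      have hi2 : (i:ℝ) + 2 ≤ a := by exact_mod_cast (by omega : i + 2 ≤ a)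
      have := step_le n a han (x - (i+1)) (by linarith) (by linarith)
      have he : x - (i+1) + 1 = x - i := by ring
      rw [he] at this
      calc |PP n a (x - ((i:ℕ)+1:ℕ))| = |PP n a (x - ((i:ℝ)+1))| := by push_cast; ring_nf
        _ ≤ |PP n a (x - i)| := this
    · rw [if_neg h1]
      split
      · exact abs_nonneg _
      · exact le_refl 0
  have hc1 : c 1 ≤ c 0 / 2 := by
    simp only [hc]
    rw [if_pos (by omega : 0 < a)]
    by_cases h2 : 1 < a
    · rw [if_pos h2]
      have ha2 : (2:ℝ) ≤ a := by exact_mod_cast h2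
      have := step_le2 n a han (x - 1) (by linarith) (by linarith) (by linarith)
      have he : x - 1 + 1 = x := by ring
      rw [he] at this
      have he0 : x - ((0:ℕ):ℝ) = x := by norm_num
      rw [he0]
      push_cast
      linarith
    · rw [if_neg h2]
      have he0 : x - ((0:ℕ):ℝ) = x := by norm_num
      rw [he0]
      positivity
  have heq : (-1:ℝ)^a * ∑ i ∈ Finset.range a, PP n a (x - i)
      = ∑ i ∈ Finset.range a, (-1:ℝ)^i * c i := by
    rw [Finset.mul_sum]
    refine Finset.sum_congr rfl fun i hi => ?_
    have hia : i < a := Finset.mem_range.mp hi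
    simp only [hc]
    rw [if_pos hia, abs_PP_eq n a i hia han x hx1 hx2, ← mul_assoc, ← pow_add]
    congr 2
    omega
  have hlow := alt_lower a ha1 c hpos hdec
  have hc0 : c 0 = |PP n a x| := by
    simp only [hc]
    rw [if_pos (by omega : 0 < a)]
    norm_num
  rw [heq]
  rw [hc0] at hlow hc1
  linarith

theorem abs_I_lower_bound (n a : ℕ) (hn : 1 ≤ n) (ha1 : 1 ≤ a) (han : a ≤ n) :
    |I n a| ≥ (1/2) * ∫ x in ((a:ℝ)-1)..(a:ℝ),
      |∏ k ∈ (Finset.range (n+1)).erase a, ((k:ℝ)^2 - x^2)| := by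
  have hcont := contPP n a
  have hIdef : I n a = ∫ x in (0:ℝ)..(a:ℝ), PP n a x := rfl
  -- step: sum of adjacent intervals
  have hadj : ∑ j ∈ Finset.range a, ∫ x in ((j:ℕ):ℝ)..(((j+1:ℕ)):ℝ), PP n a x
      = ∫ x in ((0:ℕ):ℝ)..((a:ℕ):ℝ), PP n a x :=
    intervalIntegral.sum_integral_adjacent_intervals
      (fun k _ => (hcont.intervalIntegrable _ _))
  -- each piece as integral over (a-1, a)
  have hpiece : ∀ j, j < a → (∫ x in ((j:ℕ):ℝ)..(((j+1:ℕ)):ℝ), PP n a x)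
      = ∫ x in ((a:ℝ)-1)..(a:ℝ), PP n a (x - ((a:ℝ)-1-(j:ℝ))) := by
    intro j hj
    have h := intervalIntegral.integral_comp_sub_right (a := (a:ℝ)-1) (b := (a:ℝ))
      (fun x => PP n a x) ((a:ℝ)-1-(j:ℝ))
    rw [show ((a:ℝ)-1) - ((a:ℝ)-1-(j:ℝ)) = ((j:ℕ):ℝ) by push_cast; ring,
        show (a:ℝ) - ((a:ℝ)-1-(j:ℝ)) = (((j+1:ℕ)):ℝ) by push_cast; ring] at h
    exact h.symm
  have hsum : I n a = ∫ x in ((a:ℝ)-1)..(a:ℝ),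
      ∑ j ∈ Finset.range a, PP n a (x - ((a:ℝ)-1-(j:ℝ))) := by
    rw [hIdef, show (0:ℝ) = ((0:ℕ):ℝ) by norm_num, ← hadj,
      Finset.sum_congr rfl (fun j hj => hpiece j (Finset.mem_range.mp hj)),
      ← intervalIntegral.integral_finset_sum]
    intro j _
    exact ((hcont.comp (by continuity)).intervalIntegrable _ _)
  -- rewrite sum via reflection
  have hrefl : ∀ x : ℝ, ∑ j ∈ Finset.range a, PP n a (x - ((a:ℝ)-1-(j:ℝ)))
      = ∑ i ∈ Finset.range a, PP n a (x - (i:ℝ)) := by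
    intro x
    rw [← Finset.sum_range_reflect (fun i => PP n a (x - (i:ℝ))) a]
    refine Finset.sum_congr rfl fun j hj => ?_
    have hja : j < a := Finset.mem_range.mp hj
    congr 1
    have : ((a - 1 - j : ℕ):ℝ) = (a:ℝ) - 1 - (j:ℝ) := by
      have : a - 1 - j = a - (1 + j) := by omega
      rw [this, Nat.cast_sub (by omega)]
      push_cast
      ring
    rw [this]
  have hsum2 : I n a = ∫ x in ((a:ℝ)-1)..(a:ℝ),
      ∑ i ∈ Finset.range a, PP n a (x - (i:ℝ)) := by
    rw [hsum]
    congr 1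
    ext x
    exact hrefl x
  -- monotonicity
  set g : ℝ → ℝ := fun x => (-1:ℝ)^a * ∑ i ∈ Finset.range a, PP n a (x - (i:ℝ)) with hg
  have hgcont : Continuous g := by
    apply Continuous.mul continuous_const
    exact continuous_finset_sum _ fun i _ => hcont.comp (by continuity)
  have hfcont : Continuous (fun x => (1/2) * |PP n a x|) := by
    apply Continuous.mul continuous_const hcont.abs
  have hle : ∀ x ∈ Set.Icc ((a:ℝ)-1) (a:ℝ), (1/2) * |PP n a x| ≤ g x := by
    have hsub : Set.Icc ((a:ℝ)-1) (a:ℝ) ⊆ {x | (1/2) * |PP n a x| ≤ g x} := by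
      rw [← closure_Ioo (by linarith : (a:ℝ)-1 ≠ (a:ℝ))]
      apply closure_minimal
      · intro x hx
        exact pointwise n a hn ha1 han x hx.1 hx.2
      · exact isClosed_le hfcont hgcont
    exact fun x hx => hsub hx
  have hmono := intervalIntegral.integral_mono_on (μ := MeasureTheory.volume) (by linarith : (a:ℝ)-1 ≤ (a:ℝ))
    (hfcont.intervalIntegrable _ _) (hgcont.intervalIntegrable _ _) hle
  rw [intervalIntegral.integral_const_mul, intervalIntegral.integral_const_mul] at hmono
  have hgI : ∫ x in ((a:ℝ)-1)..(a:ℝ), ∑ i ∈ Finset.range a, PP n a (x - (i:ℝ))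
      = I n a := hsum2.symm
  rw [hgI] at hmono
  have habs : (-1:ℝ)^a * I n a ≤ |I n a| := by
    rcases Nat.even_or_odd a with he | ho
    · rw [he.neg_one_pow, one_mul]; exact le_abs_self _
    · rw [ho.neg_one_pow, neg_one_mul]; exact neg_le_abs _
  have : (1/2) * ∫ x in ((a:ℝ)-1)..(a:ℝ), |PP n a x| ≤ |I n a| := le_trans hmono habs
  exact this
end

section
/- For all integers n ≥ 1 and 1 ≤ a ≤ n, one has |I(n,a)| ≤ ∫_{a−1}^{a} |∏_{k ∈ {0,…,n}, k ≠ a} (k² − x²)| dx; that is, the absolute value of the integral over [0,a] is at most the integral of the absolute value of the integrand over the last unit interval [a−1, a]. -/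
open Real

section aux

lemma hA_shift (n : ℕ) (x : ℝ) :
    ((n:ℝ) - x) * ∏ k ∈ Finset.range (n+1), ((k:ℝ) - (x+1))
      = (-1 - x) * ∏ k ∈ Finset.range (n+1), ((k:ℝ) - x) := by
  rw [Finset.prod_range_succ' (fun k => (k:ℝ) - (x+1)) n,
      Finset.prod_range_succ (fun k => (k:ℝ) - x) n]
  have h : (∏ k ∈ Finset.range n, ((((k:ℕ)+1:ℕ):ℝ) - (x+1))) = ∏ k ∈ Finset.range n, ((k:ℝ) - x) := by
    refine Finset.prod_congr rfl fun k _ => ?_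
    push_cast; ring
  rw [h]; push_cast; ring

lemma hB_shift (n : ℕ) (x : ℝ) :
    x * ∏ k ∈ Finset.range (n+1), ((k:ℝ) + (x+1))
      = ((n:ℝ) + 1 + x) * ∏ k ∈ Finset.range (n+1), ((k:ℝ) + x) := by
  have h1 := Finset.prod_range_succ' (fun k => (k:ℝ) + x) (n+1)
  have h2 := Finset.prod_range_succ (fun k => (k:ℝ) + x) (n+1)
  have h : (∏ k ∈ Finset.range (n+1), ((((k:ℕ)+1:ℕ):ℝ) + x)) = ∏ k ∈ Finset.range (n+1), ((k:ℝ) + (x+1)) := by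
    refine Finset.prod_congr rfl fun k _ => ?_
    push_cast; ring
  rw [h] at h1
  rw [h1] at h2
  push_cast at h2 ⊢
  linarith [h2]

lemma h_split (n : ℕ) (x : ℝ) :
    (∏ k ∈ Finset.range (n+1), ((k:ℝ)^2 - x^2))
      = (∏ k ∈ Finset.range (n+1), ((k:ℝ) - x)) * ∏ k ∈ Finset.range (n+1), ((k:ℝ) + x) := by
  rw [← Finset.prod_mul_distrib]
  refine Finset.prod_congr rfl fun k _ => ?_
  ring

lemma h_shift (n : ℕ) (x : ℝ) :
    x * ((n:ℝ) - x) * ∏ k ∈ Finset.range (n+1), ((k:ℝ)^2 - (x+1)^2)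
      = -((1+x) * ((n:ℝ)+1+x)) * ∏ k ∈ Finset.range (n+1), ((k:ℝ)^2 - x^2) := by
  rw [h_split n (x+1), h_split n x]
  have hA := hA_shift n x
  have hB := hB_shift n x
  calc x * ((n:ℝ) - x) * ((∏ k ∈ Finset.range (n+1), ((k:ℝ) - (x+1))) * ∏ k ∈ Finset.range (n+1), ((k:ℝ) + (x+1)))
      = (((n:ℝ) - x) * ∏ k ∈ Finset.range (n+1), ((k:ℝ) - (x+1))) *
          (x * ∏ k ∈ Finset.range (n+1), ((k:ℝ) + (x+1))) := by ring
    _ = ((-1 - x) * ∏ k ∈ Finset.range (n+1), ((k:ℝ) - x)) *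
          (((n:ℝ)+1+x) * ∏ k ∈ Finset.range (n+1), ((k:ℝ) + x)) := by rw [hA, hB]
    _ = _ := by ring

/-- relation between the full product and the erased product -/
lemma F_rel (n a : ℕ) (han : a ≤ n) (x : ℝ) :
    ((a:ℝ)^2 - x^2) * ∏ k ∈ (Finset.range (n+1)).erase a, ((k:ℝ)^2 - x^2)
      = ∏ k ∈ Finset.range (n+1), ((k:ℝ)^2 - x^2) :=
  Finset.mul_prod_erase (Finset.range (n+1)) (fun k => (k:ℝ)^2 - x^2)
    (Finset.mem_range.2 (Nat.lt_succ_of_le han))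

/-- pointwise monotonicity of |F| under shift by 1 -/
lemma abs_F_mono (n a : ℕ) (han : a ≤ n) (x : ℝ) (hx0 : 0 ≤ x) (hxa : x + 1 ≤ (a:ℝ)) :
    |∏ k ∈ (Finset.range (n+1)).erase a, ((k:ℝ)^2 - x^2)|
      ≤ |∏ k ∈ (Finset.range (n+1)).erase a, ((k:ℝ)^2 - (x+1)^2)| := by
  set F : ℝ → ℝ := fun y => ∏ k ∈ (Finset.range (n+1)).erase a, ((k:ℝ)^2 - y^2) with hFdef
  have hna : (a:ℝ) ≤ (n:ℝ) := Nat.cast_le.2 han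
  have key : x * ((n:ℝ) - x) * (((a:ℝ)^2 - (x+1)^2) * F (x+1))
      = -((1+x) * ((n:ℝ)+1+x)) * (((a:ℝ)^2 - x^2) * F x) := by
    rw [F_rel n a han (x+1), F_rel n a han x]
    exact h_shift n x
  have c1nn : 0 ≤ x * ((n:ℝ) - x) * ((a:ℝ)^2 - (x+1)^2) := by
    apply mul_nonneg (mul_nonneg hx0 (by linarith)) (by nlinarith)
  have c2pos : 0 < (1+x) * ((n:ℝ)+1+x) * ((a:ℝ)^2 - x^2) := by
    apply mul_pos (mul_pos (by linarith) (by linarith)) (by nlinarith)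
  have habs : x * ((n:ℝ) - x) * ((a:ℝ)^2 - (x+1)^2) * |F (x+1)|
      = (1+x) * ((n:ℝ)+1+x) * ((a:ℝ)^2 - x^2) * |F x| := by
    have e1 : |x * ((n:ℝ) - x) * (((a:ℝ)^2 - (x+1)^2) * F (x+1))|
        = x * ((n:ℝ) - x) * ((a:ℝ)^2 - (x+1)^2) * |F (x+1)| := by
      rw [show x * ((n:ℝ) - x) * (((a:ℝ)^2 - (x+1)^2) * F (x+1))
          = (x * ((n:ℝ) - x) * ((a:ℝ)^2 - (x+1)^2)) * F (x+1) by ring,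
        abs_mul, abs_of_nonneg c1nn]
    have e2 : |-((1+x) * ((n:ℝ)+1+x)) * (((a:ℝ)^2 - x^2) * F x)|
        = (1+x) * ((n:ℝ)+1+x) * ((a:ℝ)^2 - x^2) * |F x| := by
      rw [show -((1+x) * ((n:ℝ)+1+x)) * (((a:ℝ)^2 - x^2) * F x)
          = -(((1+x) * ((n:ℝ)+1+x) * ((a:ℝ)^2 - x^2)) * F x) by ring,
        abs_neg, abs_mul, abs_of_nonneg (le_of_lt c2pos)]
    rw [← e1, ← e2, key]
  have hc1le : x * ((n:ℝ) - x) * ((a:ℝ)^2 - (x+1)^2)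
      ≤ (1+x) * ((n:ℝ)+1+x) * ((a:ℝ)^2 - x^2) := by
    apply mul_le_mul
    · apply mul_le_mul (by linarith) (by linarith) (by linarith) (by linarith)
    · nlinarith
    · nlinarith
    · apply mul_nonneg (by linarith) (by linarith)
  have step : (1+x) * ((n:ℝ)+1+x) * ((a:ℝ)^2 - x^2) * |F x|
      ≤ (1+x) * ((n:ℝ)+1+x) * ((a:ℝ)^2 - x^2) * |F (x+1)| := by
    rw [← habs]
    exact mul_le_mul_of_nonneg_right hc1le (abs_nonneg _)
  exact le_of_mul_le_mul_left (by rw [mul_comm ((1+x) * ((n:ℝ)+1+x) * ((a:ℝ)^2 - x^2)) (|F x|)] at step ⊢; exact step) c2pos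

/-- sign of F on the interval [j, j+1] -/
lemma sign_F (n a j : ℕ) (hja : j + 1 ≤ a) (han : a ≤ n) (x : ℝ)
    (hx1 : (j:ℝ) ≤ x) (hx2 : x ≤ (j:ℝ) + 1) :
    0 ≤ (-1:ℝ)^(j+1) * ∏ k ∈ (Finset.range (n+1)).erase a, ((k:ℝ)^2 - x^2) := by
  have hx0 : (0:ℝ) ≤ x := le_trans (by positivity) hx1
  have hTS : Finset.range (j+1) ⊆ (Finset.range (n+1)).erase a := by
    intro k hk
    rw [Finset.mem_range] at hk
    rw [Finset.mem_erase, Finset.mem_range]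
    omega
  rw [← Finset.prod_sdiff hTS]
  have hprodT : ∏ k ∈ Finset.range (j+1), ((k:ℝ)^2 - x^2)
      = (-1:ℝ)^(j+1) * ∏ k ∈ Finset.range (j+1), (x^2 - (k:ℝ)^2) := by
    rw [show ∏ k ∈ Finset.range (j+1), ((k:ℝ)^2 - x^2)
        = ∏ k ∈ Finset.range (j+1), ((-1) * (x^2 - (k:ℝ)^2)) from
      Finset.prod_congr rfl fun k _ => by ring]
    rw [Finset.prod_mul_distrib, Finset.prod_const, Finset.card_range]
  rw [hprodT]
  have hsq : (-1:ℝ)^(j+1) * (-1:ℝ)^(j+1) = 1 := by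
    rw [← mul_pow]; norm_num
  have hgoal : (-1:ℝ)^(j+1) * ((∏ k ∈ (Finset.range (n+1)).erase a \ Finset.range (j+1), ((k:ℝ)^2 - x^2)) *
        ((-1:ℝ)^(j+1) * ∏ k ∈ Finset.range (j+1), (x^2 - (k:ℝ)^2)))
      = (∏ k ∈ (Finset.range (n+1)).erase a \ Finset.range (j+1), ((k:ℝ)^2 - x^2)) *
        ∏ k ∈ Finset.range (j+1), (x^2 - (k:ℝ)^2) := by
    rw [show (-1:ℝ)^(j+1) * ((∏ k ∈ (Finset.range (n+1)).erase a \ Finset.range (j+1), ((k:ℝ)^2 - x^2)) *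
        ((-1:ℝ)^(j+1) * ∏ k ∈ Finset.range (j+1), (x^2 - (k:ℝ)^2)))
      = ((-1:ℝ)^(j+1) * (-1:ℝ)^(j+1)) * ((∏ k ∈ (Finset.range (n+1)).erase a \ Finset.range (j+1), ((k:ℝ)^2 - x^2)) *
        ∏ k ∈ Finset.range (j+1), (x^2 - (k:ℝ)^2)) by ring, hsq, one_mul]
  rw [hgoal]
  apply mul_nonneg
  · apply Finset.prod_nonneg
    intro k hk
    rw [Finset.mem_sdiff, Finset.mem_range] at hk
    have hk2 : j + 1 ≤ k := by
      rcases hk with ⟨_, hk2⟩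
      omega
    have : (j:ℝ) + 1 ≤ (k:ℝ) := by exact_mod_cast hk2
    nlinarith
  · apply Finset.prod_nonneg
    intro k hk
    rw [Finset.mem_range] at hk
    have : (k:ℝ) ≤ (j:ℝ) := by exact_mod_cast Nat.lt_succ_iff.1 hk
    nlinarith

/-- alternating sum bound -/
lemma alt_bound (B : ℕ → ℝ) (a : ℕ) (ha : 1 ≤ a) (h0 : ∀ j, 0 ≤ B j)
    (hmono : ∀ j, j + 2 ≤ a → B j ≤ B (j+1)) :
    |∑ j ∈ Finset.range a, (-1:ℝ)^(j+1) * B j| ≤ B (a-1) := by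
  have main : ∀ m, 1 ≤ m → m ≤ a →
      0 ≤ (-1:ℝ)^m * ∑ j ∈ Finset.range m, (-1:ℝ)^(j+1) * B j ∧
      (-1:ℝ)^m * ∑ j ∈ Finset.range m, (-1:ℝ)^(j+1) * B j ≤ B (m-1) := by
    intro m
    induction m with
    | zero => omega
    | succ m ih =>
      intro _ hma
      rcases Nat.eq_zero_or_pos m with hm0 | hm1
      · subst hm0
        simp [Finset.sum_range_one]
        exact h0 0
      · obtain ⟨ih1, ih2⟩ := ih hm1 (by omega)
        have hBm : B (m-1) ≤ B m := by
          have := hmono (m-1) (by omega)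
          rwa [Nat.sub_add_cancel hm1] at this
        rw [Finset.sum_range_succ]
        have hexp : (-1:ℝ)^(m+1) * ((∑ j ∈ Finset.range m, (-1:ℝ)^(j+1) * B j) + (-1:ℝ)^(m+1) * B m)
            = B m - (-1:ℝ)^m * ∑ j ∈ Finset.range m, (-1:ℝ)^(j+1) * B j := by
          have hsq : (-1:ℝ)^(m+1) * (-1:ℝ)^(m+1) = 1 := by rw [← mul_pow]; norm_num
          rw [mul_add, ← mul_assoc, hsq, one_mul, pow_succ]
          ring
        rw [hexp]
        constructor
        · linarith
        · simp only [Nat.add_sub_cancel]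
          linarith
  obtain ⟨h1, h2⟩ := main a ha le_rfl
  have : |∑ j ∈ Finset.range a, (-1:ℝ)^(j+1) * B j|
      = |(-1:ℝ)^a * ∑ j ∈ Finset.range a, (-1:ℝ)^(j+1) * B j| := by
    rw [abs_mul, abs_pow, abs_neg, abs_one, one_pow, one_mul]
  rw [this, abs_of_nonneg h1]
  exact h2

end aux

theorem abs_I_upper_bound (n a : ℕ) (hn : 1 ≤ n) (ha1 : 1 ≤ a) (han : a ≤ n) :
    |I n a| ≤ ∫ x in ((a:ℝ)-1)..(a:ℝ),
      |∏ k ∈ (Finset.range (n+1)).erase a, ((k:ℝ)^2 - x^2)| := by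
  set F : ℝ → ℝ := fun x => ∏ k ∈ (Finset.range (n+1)).erase a, ((k:ℝ)^2 - x^2) with hF
  have hcont : Continuous F := by
    apply continuous_finset_prod
    intro k _
    continuity
  have hint : ∀ u v : ℝ, IntervalIntegrable F MeasureTheory.volume u v :=
    fun u v => hcont.intervalIntegrable u v
  have hintabs : ∀ u v : ℝ, IntervalIntegrable (fun x => |F x|) MeasureTheory.volume u v :=
    fun u v => hcont.abs.intervalIntegrable u v
  set B : ℕ → ℝ := fun j => ∫ x in ((j:ℝ))..((j:ℝ)+1), |F x| with hB
  -- splitting the integral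
  have hsplit : ∑ j ∈ Finset.range a, ∫ x in (((j:ℕ)):ℝ)..(((j+1:ℕ)):ℝ), F x
      = ∫ x in (((0:ℕ)):ℝ)..(((a:ℕ)):ℝ), F x :=
    intervalIntegral.sum_integral_adjacent_intervals (a := fun i : ℕ => (i:ℝ))
      (fun k _ => hint _ _)
  have hI : I n a = ∑ j ∈ Finset.range a, ∫ x in ((j:ℝ))..((j:ℝ)+1), F x := by
    rw [I, ← hF]
    rw [show (0:ℝ) = ((0:ℕ):ℝ) by norm_num]
    rw [← hsplit]
    refine Finset.sum_congr rfl fun j _ => ?_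
    push_cast
    rfl
  -- sign of each piece
  have hsign : ∀ j ∈ Finset.range a,
      ∫ x in ((j:ℝ))..((j:ℝ)+1), F x = (-1:ℝ)^(j+1) * B j := by
    intro j hj
    rw [Finset.mem_range] at hj
    have hcongr : ∫ x in ((j:ℝ))..((j:ℝ)+1), |F x|
        = ∫ x in ((j:ℝ))..((j:ℝ)+1), (-1:ℝ)^(j+1) * F x := by
      apply intervalIntegral.integral_congr
      intro x hx
      rw [Set.uIcc_of_le (by linarith)] at hx
      have hs := sign_F n a j (by omega) han x hx.1 hx.2
      have : |(-1:ℝ)^(j+1) * F x| = (-1:ℝ)^(j+1) * F x := abs_of_nonneg hs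
      rw [abs_mul, abs_pow, abs_neg, abs_one, one_pow, one_mul] at this
      exact this
    have hBj : B j = (-1:ℝ)^(j+1) * ∫ x in ((j:ℝ))..((j:ℝ)+1), F x := by
      rw [hB]
      simp only []
      rw [hcongr, intervalIntegral.integral_const_mul]
    have hsq : (-1:ℝ)^(j+1) * (-1:ℝ)^(j+1) = 1 := by rw [← mul_pow]; norm_num
    rw [hBj, ← mul_assoc, hsq, one_mul]
  have hI2 : I n a = ∑ j ∈ Finset.range a, (-1:ℝ)^(j+1) * B j := by
    rw [hI]
    exact Finset.sum_congr rfl hsign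
  -- B is nonneg
  have hB0 : ∀ j, 0 ≤ B j := fun j =>
    intervalIntegral.integral_nonneg (by linarith) (fun u _ => abs_nonneg _)
  -- B is monotone
  have hBmono : ∀ j, j + 2 ≤ a → B j ≤ B (j+1) := by
    intro j hja
    have hja' : (j:ℝ) + 2 ≤ (a:ℝ) := by exact_mod_cast hja
    have hcomp : ∫ x in ((j:ℝ))..((j:ℝ)+1), |F (x+1)|
        = ∫ x in ((j:ℝ)+1)..(((j:ℝ)+1)+1), |F x| := by
      have := intervalIntegral.integral_comp_add_right (fun x => |F x|) 1
        (a := (j:ℝ)) (b := (j:ℝ)+1)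
      exact this
    have hle : B j ≤ ∫ x in ((j:ℝ))..((j:ℝ)+1), |F (x+1)| := by
      apply intervalIntegral.integral_mono_on (by linarith) (hintabs _ _)
        ((hcont.comp (by continuity)).abs.intervalIntegrable _ _)
      intro x hx
      exact abs_F_mono n a han x (le_trans (Nat.cast_nonneg j) hx.1) (by linarith [hx.2])
    calc B j ≤ ∫ x in ((j:ℝ))..((j:ℝ)+1), |F (x+1)| := hle
      _ = ∫ x in ((j:ℝ)+1)..(((j:ℝ)+1)+1), |F x| := hcomp
      _ = B (j+1) := by rw [hB]; push_cast; ring_nf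
  -- conclusion
  have hfinal := alt_bound B a ha1 hB0 hBmono
  rw [hI2]
  refine le_trans hfinal (le_of_eq ?_)
  have hcast : ((a-1:ℕ):ℝ) = (a:ℝ) - 1 := by
    push_cast [ha1]; ring
  show (∫ x in (((a-1:ℕ)):ℝ)..(((a-1:ℕ)):ℝ)+1, |F x|) = _
  rw [hcast]
  rw [show (a:ℝ) - 1 + 1 = (a:ℝ) by ring]
end

section
/- For all integers n ≥ 2 and j with 1 ≤ j ≤ n−1, setting a := n−j, one has |I(n,a)| ≥ (j·(2n−j)/2) · ∫_{a−1}^{a} |∏_{k ∈ {0,…,n−1}, k ≠ a} (k² − x²)| dx. (This uses that the integrand for I(n,a) factors as (n² − x²) times the integrand ∏_{k ∈ {0,…,n−1}, k ≠ a}(k² − x²), and that n² − x² ≥ j(2n−j) for x ∈ [a−1, a].) -/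
open Real

namespace AIL

noncomputable def P (n b : ℕ) (x : ℝ) : ℝ :=
  ∏ k ∈ (Finset.range (n+1)).erase b, ((k:ℝ)^2 - x^2)

lemma contP (n b : ℕ) : Continuous (P n b) := by
  apply continuous_finset_prod
  intro k _
  continuity

lemma absP (n b : ℕ) (y : ℝ) (hy : 0 ≤ y) :
    |P n b y| = (∏ k ∈ (Finset.range (n+1)).erase b, |(k:ℝ) - y|) *
                (∏ k ∈ (Finset.range (n+1)).erase b, ((k:ℝ) + y)) := by
  rw [P, Finset.abs_prod, ← Finset.prod_mul_distrib]
  refine Finset.prod_congr rfl fun k _ => ?_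
  have h : (k:ℝ)^2 - y^2 = ((k:ℝ) - y) * ((k:ℝ) + y) := by ring
  rw [h, abs_mul, abs_of_nonneg (add_nonneg (Nat.cast_nonneg k) hy)]

lemma P_shift (n b : ℕ) (hb1 : 1 ≤ b) (hbn : b + 1 ≤ n) (x : ℝ)
    (hx0 : 0 ≤ x) (hxb : x ≤ (b:ℝ) - 1) :
    |P n b (x+1)| * (x*((b:ℝ)+1+x)*((n:ℝ)-x)*((b:ℝ)-1-x)) =
    |P n b x| * ((x+1)*((b:ℝ)-x)*((n:ℝ)+1+x)*((b:ℝ)+x)) := by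
  have hbmem : b ∈ Finset.range (n+1) := by
    simp only [Finset.mem_range]; omega
  have hbn' : (b:ℝ) + 1 ≤ (n:ℝ) := by exact_mod_cast hbn
  set AE1 := ∏ k ∈ (Finset.range (n+1)).erase b, |(k:ℝ) - (x+1)| with hAE1
  set AE0 := ∏ k ∈ (Finset.range (n+1)).erase b, |(k:ℝ) - x| with hAE0
  set BE1 := ∏ k ∈ (Finset.range (n+1)).erase b, ((k:ℝ) + (x+1)) with hBE1
  set BE0 := ∏ k ∈ (Finset.range (n+1)).erase b, ((k:ℝ) + x) with hBE0
  set AF1 := ∏ k ∈ Finset.range (n+1), |(k:ℝ) - (x+1)| with hAF1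
  set AF0 := ∏ k ∈ Finset.range (n+1), |(k:ℝ) - x| with hAF0
  set BF1 := ∏ k ∈ Finset.range (n+1), ((k:ℝ) + (x+1)) with hBF1
  set BF0 := ∏ k ∈ Finset.range (n+1), ((k:ℝ) + x) with hBF0
  have h1 : AE1 * ((b:ℝ)-1-x) = AF1 := by
    rw [hAE1, hAF1, ← Finset.prod_erase_mul (Finset.range (n+1)) _ hbmem]
    congr 1
    rw [abs_of_nonneg (by linarith : (0:ℝ) ≤ (b:ℝ) - (x+1))]
    ring
  have h2 : AE0 * ((b:ℝ)-x) = AF0 := by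
    rw [hAE0, hAF0, ← Finset.prod_erase_mul (Finset.range (n+1)) _ hbmem]
    congr 1
    rw [abs_of_nonneg (by linarith : (0:ℝ) ≤ (b:ℝ) - x)]
  have h3 : BE1 * ((b:ℝ)+1+x) = BF1 := by
    rw [hBE1, hBF1, ← Finset.prod_erase_mul (Finset.range (n+1)) _ hbmem]
    congr 1
    ring
  have h4 : BE0 * ((b:ℝ)+x) = BF0 := by
    rw [hBE0, hBF0, ← Finset.prod_erase_mul (Finset.range (n+1)) _ hbmem]
  have h5 : AF1 * ((n:ℝ)-x) = (x+1) * AF0 := by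
    have e1 : AF1 = (∏ k ∈ Finset.range n, |(k:ℝ) - x|) * (x+1) := by
      rw [hAF1, Finset.prod_range_succ']
      congr 1
      · refine Finset.prod_congr rfl fun k _ => ?_
        congr 1
        push_cast
        ring
      · rw [show ((0:ℕ):ℝ) - (x+1) = -(x+1) by push_cast; ring, abs_neg,
          abs_of_nonneg (by linarith)]
    have e2 : AF0 = (∏ k ∈ Finset.range n, |(k:ℝ) - x|) * ((n:ℝ)-x) := by
      rw [hAF0, Finset.prod_range_succ, abs_of_nonneg (by linarith : (0:ℝ) ≤ (n:ℝ) - x)]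
    rw [e1, e2]; ring
  have h6 : BF1 * x = BF0 * ((n:ℝ)+1+x) := by
    have e3 : ∏ k ∈ Finset.range (n+2), ((k:ℝ) + x) = BF0 * ((n:ℝ)+1+x) := by
      rw [Finset.prod_range_succ, hBF0]
      push_cast
      ring
    have e4 : ∏ k ∈ Finset.range (n+2), ((k:ℝ) + x) = BF1 * x := by
      rw [Finset.prod_range_succ', hBF1]
      congr 1
      · refine Finset.prod_congr rfl fun k _ => ?_
        push_cast
        ring
      · simp
    rw [← e4, e3]
  have hP1 : |P n b (x+1)| = AE1 * BE1 := absP n b (x+1) (by linarith)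
  have hP0 : |P n b x| = AE0 * BE0 := absP n b x hx0
  calc |P n b (x+1)| * (x*((b:ℝ)+1+x)*((n:ℝ)-x)*((b:ℝ)-1-x))
      = (AE1 * ((b:ℝ)-1-x)) * (BE1 * ((b:ℝ)+1+x)) * (x*((n:ℝ)-x)) := by rw [hP1]; ring
    _ = AF1 * BF1 * (x*((n:ℝ)-x)) := by rw [h1, h3]
    _ = (AF1 * ((n:ℝ)-x)) * (BF1 * x) := by ring
    _ = ((x+1) * AF0) * (BF0 * ((n:ℝ)+1+x)) := by rw [h5, h6]
    _ = ((x+1)*((n:ℝ)+1+x)) * ((AE0 * ((b:ℝ)-x)) * (BE0 * ((b:ℝ)+x))) := by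
        rw [h2, h4]; ring
    _ = |P n b x| * ((x+1)*((b:ℝ)-x)*((n:ℝ)+1+x)*((b:ℝ)+x)) := by rw [hP0]; ring

lemma ineq1 (A N x : ℝ) (h1 : 1 ≤ A) (hAN : A + 1 ≤ N) (hx0 : 0 ≤ x) (hxA : x ≤ A - 1) :
    1 * (x*(A+1+x)*(N-x)*(A-1-x)) ≤ (x+1)*(A-x)*(N+1+x)*(A+x) := by
  have k1 : x*(A+1+x) ≤ (x+1)*(A+x) := by nlinarith
  have k2 : (N-x)*(A-1-x) ≤ (N+1+x)*(A-x) :=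
    mul_le_mul (by linarith) (by linarith) (by linarith) (by linarith)
  calc 1 * (x*(A+1+x)*(N-x)*(A-1-x)) = (x*(A+1+x)) * ((N-x)*(A-1-x)) := by ring
    _ ≤ ((x+1)*(A+x)) * ((N+1+x)*(A-x)) :=
        mul_le_mul k1 k2 (mul_nonneg (by linarith) (by linarith))
          (mul_nonneg (by linarith) (by linarith))
    _ = (x+1)*(A-x)*(N+1+x)*(A+x) := by ring

lemma ineq2 (A N x : ℝ) (h1 : 1 ≤ A) (hAN : A + 1 ≤ N) (hx0 : 0 ≤ x) (hxA : x ≤ A - 1)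
    (hx2 : A - 2 ≤ x) :
    2 * (x*(A+1+x)*(N-x)*(A-1-x)) ≤ (x+1)*(A-x)*(N+1+x)*(A+x) := by
  have k1 : x*(A+1+x) ≤ (x+1)*(A+x) := by nlinarith
  have k2 : 2 * ((N-x)*(A-1-x)) ≤ (N+1+x)*(A-x) := by
    have := mul_le_mul (show N - x ≤ N+1+x by linarith)
      (show 2*(A-1-x) ≤ A - x by linarith)
      (by linarith) (show (0:ℝ) ≤ N+1+x by linarith)
    linarith [this]
  calc 2 * (x*(A+1+x)*(N-x)*(A-1-x)) = (x*(A+1+x)) * (2*((N-x)*(A-1-x))) := by ring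
    _ ≤ ((x+1)*(A+x)) * ((N+1+x)*(A-x)) :=
        mul_le_mul k1 k2 (by nlinarith) (mul_nonneg (by linarith) (by linarith))
    _ = (x+1)*(A-x)*(N+1+x)*(A+x) := by ring

lemma key_pointwise (n b : ℕ) (hb1 : 1 ≤ b) (hbn : b + 1 ≤ n) (x c : ℝ)
    (hx0 : 0 ≤ x) (hxb : x ≤ (b:ℝ) - 1)
    (hc : c * (x*((b:ℝ)+1+x)*((n:ℝ)-x)*((b:ℝ)-1-x)) ≤
          (x+1)*((b:ℝ)-x)*((n:ℝ)+1+x)*((b:ℝ)+x)) :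
    c * |P n b x| ≤ |P n b (x+1)| := by
  have hb1' : (1:ℝ) ≤ (b:ℝ) := by exact_mod_cast hb1
  have hbn' : (b:ℝ) + 1 ≤ (n:ℝ) := by exact_mod_cast hbn
  set u := x*((b:ℝ)+1+x)*((n:ℝ)-x)*((b:ℝ)-1-x) with hu
  set v := (x+1)*((b:ℝ)-x)*((n:ℝ)+1+x)*((b:ℝ)+x) with hv
  have hkey : |P n b (x+1)| * u = |P n b x| * v := P_shift n b hb1 hbn x hx0 hxb
  have hv0 : 0 < v := by
    apply mul_pos (mul_pos (mul_pos (by linarith) (by linarith)) (by linarith)) (by linarith)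
  have hP1 : 0 ≤ |P n b (x+1)| := abs_nonneg _
  have hmain : (c * |P n b x|) * v ≤ |P n b (x+1)| * v := by
    calc (c * |P n b x|) * v = c * (|P n b x| * v) := by ring
      _ = c * (|P n b (x+1)| * u) := by rw [hkey]
      _ = |P n b (x+1)| * (c * u) := by ring
      _ ≤ |P n b (x+1)| * v := mul_le_mul_of_nonneg_left hc hP1
  exact le_of_mul_le_mul_right hmain hv0

lemma sign_P (n b m : ℕ) (hmb : m < b) (hbn : b ≤ n) {x : ℝ}
    (hx1 : (m:ℝ) ≤ x) (hx2 : x ≤ (m:ℝ)+1) :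
    |P n b x| = (-1:ℝ)^(m+1) * P n b x := by
  have hx0 : (0:ℝ) ≤ x := le_trans (Nat.cast_nonneg m) hx1
  have h : 0 ≤ (-1:ℝ)^(m+1) * P n b x := by
    have hsplit : P n b x =
        (∏ k ∈ ((Finset.range (n+1)).erase b).filter (fun k => k ≤ m), ((k:ℝ)^2 - x^2)) *
        (∏ k ∈ ((Finset.range (n+1)).erase b).filter (fun k => ¬ k ≤ m), ((k:ℝ)^2 - x^2)) := by
      rw [P, Finset.prod_filter_mul_prod_filter_not]
    have hfe : ((Finset.range (n+1)).erase b).filter (fun k => k ≤ m) = Finset.range (m+1) := by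
      ext k
      simp only [Finset.mem_filter, Finset.mem_erase, Finset.mem_range]
      omega
    have h1 : ∏ k ∈ Finset.range (m+1), ((k:ℝ)^2 - x^2)
        = (-1:ℝ)^(m+1) * ∏ k ∈ Finset.range (m+1), (x^2 - (k:ℝ)^2) := by
      rw [show (fun k : ℕ => ((k:ℝ)^2 - x^2)) = (fun k : ℕ => (-1) * (x^2 - (k:ℝ)^2)) from
        funext fun k => by ring]
      rw [Finset.prod_mul_distrib, Finset.prod_const, Finset.card_range]
    have hG : 0 ≤ ∏ k ∈ Finset.range (m+1), (x^2 - (k:ℝ)^2) := by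
      apply Finset.prod_nonneg
      intro k hk
      have hk' : (k:ℝ) ≤ (m:ℝ) := by
        have : k ≤ m := by simpa [Nat.lt_succ_iff] using Finset.mem_range.mp hk
        exact_mod_cast this
      have : (k:ℝ)^2 ≤ x^2 := pow_le_pow_left₀ (Nat.cast_nonneg k) (by linarith) 2
      linarith
    have hF2 : 0 ≤ ∏ k ∈ ((Finset.range (n+1)).erase b).filter (fun k => ¬ k ≤ m),
        ((k:ℝ)^2 - x^2) := by
      apply Finset.prod_nonneg
      intro k hk
      have hk' : m + 1 ≤ k := by
        simp only [Finset.mem_filter] at hk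
        omega
      have hk'' : (m:ℝ) + 1 ≤ (k:ℝ) := by exact_mod_cast hk'
      have : x^2 ≤ (k:ℝ)^2 := pow_le_pow_left₀ hx0 (by linarith) 2
      linarith
    have hsq : (-1:ℝ)^(m+1) * (-1:ℝ)^(m+1) = 1 := by
      rw [← pow_add]
      exact Even.neg_one_pow ⟨m+1, rfl⟩
    rw [hsplit, hfe, h1]
    calc (0:ℝ) ≤ (∏ k ∈ Finset.range (m+1), (x^2 - (k:ℝ)^2)) *
          ∏ k ∈ ((Finset.range (n+1)).erase b).filter (fun k => ¬ k ≤ m), ((k:ℝ)^2 - x^2) :=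
        mul_nonneg hG hF2
      _ = (-1:ℝ)^(m+1) * ((-1:ℝ)^(m+1) * (∏ k ∈ Finset.range (m+1), (x^2 - (k:ℝ)^2)) *
          ∏ k ∈ ((Finset.range (n+1)).erase b).filter (fun k => ¬ k ≤ m), ((k:ℝ)^2 - x^2)) := by
        rw [show (-1:ℝ)^(m+1) * ((-1:ℝ)^(m+1) * (∏ k ∈ Finset.range (m+1), (x^2 - (k:ℝ)^2)) *
          ∏ k ∈ ((Finset.range (n+1)).erase b).filter (fun k => ¬ k ≤ m), ((k:ℝ)^2 - x^2))
          = ((-1:ℝ)^(m+1) * (-1:ℝ)^(m+1)) * ((∏ k ∈ Finset.range (m+1), (x^2 - (k:ℝ)^2)) *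
          ∏ k ∈ ((Finset.range (n+1)).erase b).filter (fun k => ¬ k ≤ m), ((k:ℝ)^2 - x^2))
          from by ring, hsq, one_mul]
  calc |P n b x| = |(-1:ℝ)^(m+1) * P n b x| := by
        rw [abs_mul, abs_pow, abs_neg, abs_one, one_pow, one_mul]
    _ = (-1:ℝ)^(m+1) * P n b x := abs_of_nonneg h

lemma alt_bound (J : ℕ → ℝ) (b : ℕ) (hJ : ∀ m, 0 ≤ J m)
    (hmono : ∀ m, m + 2 ≤ b → J m ≤ J (m+1)) :
    ∀ M, M < b → 0 ≤ (-1:ℝ)^(M+1) * (∑ m ∈ Finset.range (M+1), (-1:ℝ)^(m+1) * J m) ∧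
      (-1:ℝ)^(M+1) * (∑ m ∈ Finset.range (M+1), (-1:ℝ)^(m+1) * J m) ≤ J M := by
  intro M
  induction M with
  | zero =>
    intro _
    constructor
    · simpa using hJ 0
    · simp
  | succ M ih =>
    intro h
    obtain ⟨ih1, ih2⟩ := ih (by omega)
    have hm : J M ≤ J (M+1) := hmono M (by omega)
    rw [Finset.sum_range_succ]
    set e := (-1:ℝ)^(M+1) with he
    have hpow : (-1:ℝ)^(M+1+1) = -e := by rw [pow_succ, he]; ring
    have he2 : e * e = 1 := by
      rw [he, ← pow_add]
      exact Even.neg_one_pow ⟨M+1, rfl⟩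
    rw [hpow]
    constructor <;> nlinarith [ih1, ih2, hm, hJ (M+1), he2]

lemma main_bound (n b : ℕ) (hb1 : 1 ≤ b) (hbn : b + 1 ≤ n) :
    (∫ x in ((b:ℝ)-1)..(b:ℝ), |P n b x|) / 2 ≤ |I n b| := by
  have hb1' : (1:ℝ) ≤ (b:ℝ) := by exact_mod_cast hb1
  have hbn' : (b:ℝ) + 1 ≤ (n:ℝ) := by exact_mod_cast hbn
  set J : ℕ → ℝ := fun m => ∫ x in (m:ℝ)..((m:ℝ)+1), |P n b x| with hJdef
  have hJ : ∀ m, 0 ≤ J m := fun m =>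
    intervalIntegral.integral_nonneg (by linarith) (fun x _ => abs_nonneg _)
  have hJstep : ∀ (m : ℕ) (c : ℝ),
      (∀ x ∈ Set.Icc ((m:ℝ)) ((m:ℝ)+1), c * |P n b x| ≤ |P n b (x+1)|) →
      c * J m ≤ J (m+1) := by
    intro m c hpt
    have h1 : J (m+1) = ∫ x in ((m:ℝ)+1)..(((m:ℝ)+1)+1), |P n b x| := by
      simp only [hJdef]
      push_cast
      ring_nf
    have h2 : (∫ x in ((m:ℝ)+1)..(((m:ℝ)+1)+1), |P n b x|)
        = ∫ x in (m:ℝ)..((m:ℝ)+1), |P n b (x+1)| :=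
      (intervalIntegral.integral_comp_add_right (fun y => |P n b y|) 1).symm
    have h3 : c * J m = ∫ x in (m:ℝ)..((m:ℝ)+1), c * |P n b x| := by
      simp only [hJdef]
      rw [intervalIntegral.integral_const_mul]
    rw [h1, h2, h3]
    exact intervalIntegral.integral_mono_on (by linarith)
      ((continuous_const.mul (contP n b).abs).intervalIntegrable _ _)
      (((contP n b).comp (continuous_add_right (1:ℝ))).abs.intervalIntegrable _ _) hpt
  have hmono : ∀ m, m + 2 ≤ b → J m ≤ J (m+1) := by
    intro m hm
    have hm' : (m:ℝ) + 2 ≤ (b:ℝ) := by exact_mod_cast hm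
    have h := hJstep m 1 (by
      intro x hx
      obtain ⟨hx1, hx2⟩ := hx
      have hx0 : (0:ℝ) ≤ x := le_trans (Nat.cast_nonneg m) hx1
      exact key_pointwise n b hb1 hbn x 1 hx0 (by linarith)
        (ineq1 (b:ℝ) (n:ℝ) x hb1' hbn' hx0 (by linarith)))
    linarith
  have hI : I n b = ∑ m ∈ Finset.range b, (-1:ℝ)^(m+1) * J m := by
    have h0 : I n b = ∑ m ∈ Finset.range b, ∫ x in ((m:ℕ):ℝ)..(((m+1:ℕ)):ℝ), P n b x := by
      rw [intervalIntegral.sum_integral_adjacent_intervals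
        (a := fun k : ℕ => (k:ℝ)) (fun k _ => (contP n b).intervalIntegrable _ _)]
      simp [I, P]
    rw [h0]
    refine Finset.sum_congr rfl fun m hm => ?_
    have hmb : m < b := Finset.mem_range.mp hm
    have hcast : ((m+1:ℕ):ℝ) = (m:ℝ)+1 := by push_cast; ring
    rw [hcast]
    have hsgn : ∀ x ∈ Set.uIcc ((m:ℝ)) ((m:ℝ)+1),
        (fun y => |P n b y|) x = (fun y => (-1:ℝ)^(m+1) * P n b y) x := by
      intro x hx
      rw [Set.uIcc_of_le (by linarith)] at hx
      exact sign_P n b m hmb (by omega) hx.1 hx.2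
    have hJm : J m = (-1:ℝ)^(m+1) * ∫ x in (m:ℝ)..((m:ℝ)+1), P n b x := by
      simp only [hJdef]
      rw [intervalIntegral.integral_congr hsgn, intervalIntegral.integral_const_mul]
    have he2 : (-1:ℝ)^(m+1) * (-1:ℝ)^(m+1) = 1 := by
      rw [← pow_add]; exact Even.neg_one_pow ⟨m+1, rfl⟩
    rw [hJm, ← mul_assoc, he2, one_mul]
  have hJb1 : J (b-1) = ∫ x in ((b:ℝ)-1)..(b:ℝ), |P n b x| := by
    simp only [hJdef]
    rw [Nat.cast_sub hb1]
    norm_num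
  rcases eq_or_lt_of_le hb1 with hb1e | hb2
  · -- b = 1
    have hb1e' : b = 1 := hb1e.symm
    subst hb1e'
    rw [hI, Finset.sum_range_one]
    rw [show ((-1:ℝ)^(0+1) * J 0) = -J 0 by ring, abs_neg, abs_of_nonneg (hJ 0)]
    have hJ0 : J (1-1) = J 0 := rfl
    rw [hJ0] at hJb1
    rw [← hJb1]
    linarith [hJ 0]
  · -- 2 ≤ b
    have hstep2 : 2 * J (b-2) ≤ J (b-2+1) := by
      apply hJstep
      intro x hx
      obtain ⟨hx1, hx2⟩ := hx
      have hc2 : ((b-2:ℕ):ℝ) = (b:ℝ)-2 := by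
        rw [Nat.cast_sub (by omega)]; norm_num
      rw [hc2] at hx1 hx2
      exact key_pointwise n b hb1 hbn x 2 (by linarith) (by linarith)
        (ineq2 (b:ℝ) (n:ℝ) x hb1' hbn' (by linarith) (by linarith) (by linarith))
    have hi2 : b - 2 + 1 = b - 1 := by omega
    rw [hi2] at hstep2
    obtain ⟨halt1, halt2⟩ := alt_bound J b hJ hmono (b-2) (by omega)
    rw [hi2] at halt1 halt2
    set e := (-1:ℝ)^(b-1) with he
    set s := ∑ m ∈ Finset.range (b-1), (-1:ℝ)^(m+1) * J m with hs
    have hpow : (-1:ℝ)^(b-1+1) = -e := by rw [pow_succ, he]; ring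
    have he2 : e * e = 1 := by
      rw [he, ← pow_add]; exact Even.neg_one_pow ⟨b-1, rfl⟩
    have hb' : b = b - 1 + 1 := by omega
    have hIs : I n b = s + (-e) * J (b-1) := by
      rw [hI]
      conv_lhs => rw [hb']
      rw [Finset.sum_range_succ, ← hs, hpow]
    have habs : (-e) * (I n b) ≤ |I n b| := by
      have h1 : |(-e) * I n b| = |I n b| := by
        rw [abs_mul, abs_neg, he, abs_pow, abs_neg, abs_one, one_pow, one_mul]
      calc (-e) * I n b ≤ |(-e) * I n b| := le_abs_self _
        _ = |I n b| := h1
    have hval : (-e) * I n b = (-e) * s + J (b-1) := by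
      rw [hIs]
      linear_combination (J (b-1)) * he2
    rw [← hJb1]
    linarith [habs, hval, halt1, halt2, hstep2]

end AIL

theorem abs_I_lower_bound' (n j : ℕ) (hn : 2 ≤ n) (hj1 : 1 ≤ j) (hjn : j ≤ n - 1) :
    |I n (n - j)| ≥ ((j : ℝ) * (2*(n:ℝ) - j) / 2) *
      ∫ x in (((n - j : ℕ) : ℝ) - 1)..(((n - j : ℕ) : ℝ)),
        |∏ k ∈ (Finset.range n).erase (n - j), ((k:ℝ)^2 - x^2)| := by
  obtain ⟨b, hbdef⟩ : ∃ b, n - j = b := ⟨n - j, rfl⟩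
  rw [hbdef]
  have hb1 : 1 ≤ b := by omega
  have hbn : b + 1 ≤ n := by omega
  have hb1' : (1:ℝ) ≤ (b:ℝ) := by exact_mod_cast hb1
  have hbn' : (b:ℝ) + 1 ≤ (n:ℝ) := by exact_mod_cast hbn
  have hbr : (b:ℝ) = (n:ℝ) - (j:ℝ) := by
    rw [← hbdef, Nat.cast_sub (by omega)]
  have hmain := AIL.main_bound n b hb1 hbn
  set Q : ℝ → ℝ := fun x => ∏ k ∈ (Finset.range n).erase b, ((k:ℝ)^2 - x^2) with hQdef
  have hQcont : Continuous Q := by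
    apply continuous_finset_prod
    intro k _
    continuity
  have hPQ : ∀ x : ℝ, AIL.P n b x = ((n:ℝ)^2 - x^2) * Q x := by
    intro x
    rw [AIL.P, hQdef, Finset.range_add_one, Finset.erase_insert_of_ne (by omega : n ≠ b),
      Finset.prod_insert (by simp)]
  have hcb : (j:ℝ) * (2*(n:ℝ) - j) = (n:ℝ)^2 - (b:ℝ)^2 := by rw [hbr]; ring
  have hlow : (j:ℝ) * (2*(n:ℝ) - j) * (∫ x in ((b:ℝ)-1)..(b:ℝ), |Q x|)
      ≤ ∫ x in ((b:ℝ)-1)..(b:ℝ), |AIL.P n b x| := by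
    rw [← intervalIntegral.integral_const_mul]
    apply intervalIntegral.integral_mono_on (by linarith)
      ((continuous_const.mul hQcont.abs).intervalIntegrable _ _)
      ((AIL.contP n b).abs.intervalIntegrable _ _)
    intro x hx
    obtain ⟨hx1, hx2⟩ := hx
    have hx0 : (0:ℝ) ≤ x := by linarith
    have hxb2 : x^2 ≤ (b:ℝ)^2 := pow_le_pow_left₀ hx0 hx2 2
    have hbn2 : (b:ℝ)^2 ≤ (n:ℝ)^2 := pow_le_pow_left₀ (by linarith) (by linarith) 2
    rw [hPQ x, abs_mul, abs_of_nonneg (by linarith : (0:ℝ) ≤ (n:ℝ)^2 - x^2)]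
    apply mul_le_mul_of_nonneg_right _ (abs_nonneg _)
    rw [hcb]
    linarith
  rw [ge_iff_le]
  linarith [hmain, hlow]
end
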